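/- arXiv:2308.07742 — 2 statements merged into one kernel-verified Lean document; each statement's English description precedes it below -/
import Mathlib

section
/- Let d ≥ 1, let W : ℝ^d → ℝ^d be continuously differentiable with compact support, let Δ ⊂ ℝ^d be a bounded measurable set, and let q : ℝ × ℝ^d → ℝ be continuously differentiable. Then the map t ↦ ∫_{F_t(Δ)} q(t, y) dy is differentiable at t = 0 and d/dt|_{t=0} ∫_{F_t(Δ)} q(t, y) dy = ∫_Δ ( q̇(x) + q(0, x) · div W(x) ) dx, where q̇(x) := d/dt|_{t=0} q(t, F_t(x)) is the material derivative of q along W. -/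
open MeasureTheory

/-- Jacobian matrix of a vector field on `ℝ^d`: `(jac v x) i j = ∂ v_i / ∂ x_j`. -/
noncomputable def jac {d : ℕ} (v : EuclideanSpace ℝ (Fin d) → EuclideanSpace ℝ (Fin d))
    (x : EuclideanSpace ℝ (Fin d)) : Matrix (Fin d) (Fin d) ℝ :=
  Matrix.of fun i j => fderiv ℝ v x (EuclideanSpace.single j (1 : ℝ)) i

/-- Divergence of a vector field: the trace of its Jacobian. -/
noncomputable def divg {d : ℕ} (v : EuclideanSpace ℝ (Fin d) → EuclideanSpace ℝ (Fin d))
    (x : EuclideanSpace ℝ (Fin d)) : ℝ :=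
  Matrix.trace (jac v x)

/-!
Since `DW` is bounded and `W` is Lipschitz, for small `|t|` the map `F_t = id + t • W` is
injective with Jacobian `det (1 + t DW) > 0`, so the change of variables formula pulls the
integral back to `Δ`: `∫_{F_t(Δ)} q(t, ·) = ∫_Δ det (1 + t DW(x)) q(t, F_t x) dx`. The new
integrand is a `C¹` function of `t` and of the continuous parameter `(DW(x), W(x), x)`, so on the
compact set `closure Δ` it may be differentiated under the integral sign, and
`d/dt det (1 + t A)|₀ = tr A` produces the divergence term.
-/

open Filter Topology

theorem ContinuousLinearMap.det_id {R M : Type*} [CommRing R] [TopologicalSpace M]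
    [AddCommGroup M] [Module R M] : (ContinuousLinearMap.id R M).det = 1 :=
  LinearMap.det_id

theorem Matrix.hasDerivAt_det_one_add_smul {𝕜 ι : Type*} [NontriviallyNormedField 𝕜]
    [Fintype ι] [DecidableEq ι] (M : Matrix ι ι 𝕜) :
    HasDerivAt (fun t : 𝕜 => (1 + t • M).det) M.trace 0 := by
  open Polynomial in
  have hpoly : (fun t : 𝕜 => (1 + t • M).det) =
      fun t => (det (1 + (X : 𝕜[X]) • M.map C)).eval t := by
    funext t
    simp [eval_det, ← smul_eq_mul_diagonal]
  rw [hpoly, ← Matrix.derivative_det_one_add_X_smul]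
  exact Polynomial.hasDerivAt _ 0

theorem ContinuousLinearMap.hasDerivAt_det_id_add_smul {𝕜 E : Type*}
    [NontriviallyNormedField 𝕜] [NormedAddCommGroup E] [NormedSpace 𝕜 E] [FiniteDimensional 𝕜 E]
    (A : E →L[𝕜] E) :
    HasDerivAt (fun t : 𝕜 => (ContinuousLinearMap.id 𝕜 E + t • A).det)
      (LinearMap.trace 𝕜 E A) 0 := by
  classical
  let b := Module.finBasis 𝕜 E
  have hmat : ∀ t : 𝕜, (ContinuousLinearMap.id 𝕜 E + t • A).det =
      (1 + t • LinearMap.toMatrix b b A).det := fun t => by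
    rw [ContinuousLinearMap.det, ← LinearMap.det_toMatrix b]
    simp
  simp only [hmat, LinearMap.trace_eq_matrix_trace 𝕜 b]
  exact Matrix.hasDerivAt_det_one_add_smul _

theorem ContinuousLinearMap.contDiff_det {𝕜 E : Type*} [NontriviallyNormedField 𝕜]
    [CompleteSpace 𝕜] [NormedAddCommGroup E] [NormedSpace 𝕜 E] [FiniteDimensional 𝕜 E]
    {n : WithTop ℕ∞} : ContDiff 𝕜 n fun f : E →L[𝕜] E => f.det := by
  classical
  let b := Module.finBasis 𝕜 E
  have hentry : ∀ i j, ContDiff 𝕜 n fun f : E →L[𝕜] E => LinearMap.toMatrix b b f i j :=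
    fun i j => by
      convert (LinearMap.toContinuousLinearMap ((b.coord i).comp
        (ContinuousLinearMap.apply 𝕜 E (b j)).toLinearMap)).contDiff using 1
      ext f
      simp [LinearMap.toMatrix_apply]
  simp only [ContinuousLinearMap.det, ← LinearMap.det_toMatrix b, Matrix.det_apply,
    Units.smul_def, zsmul_eq_mul]
  exact ContDiff.sum fun σ _ => contDiff_const.mul (contDiff_prod fun i _ => hentry _ _)

theorem eventually_forall_det_id_add_smul_pos {E X : Type*} [NormedAddCommGroup E]
    [NormedSpace ℝ E] [FiniteDimensional ℝ E] {A : X → E →L[ℝ] E} {C : ℝ}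
    (hA : ∀ x, ‖A x‖ ≤ C) :
    ∀ᶠ t : ℝ in 𝓝 0, ∀ x, 0 < (ContinuousLinearMap.id ℝ E + t • A x).det := by
  have hdet : ∀ᶠ B in 𝓝 (ContinuousLinearMap.id ℝ E), 0 < B.det :=
    (ContinuousLinearMap.continuous_det.tendsto _).eventually_const_lt
      (by simp [ContinuousLinearMap.det_id])
  obtain ⟨ε, hε, hball⟩ := Metric.eventually_nhds_iff.1 hdet
  have hsmall : ∀ᶠ t : ℝ in 𝓝 0, |t| * C < ε :=
    (Continuous.tendsto (by fun_prop) 0).eventually_lt_const (by simpa using hε)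
  filter_upwards [hsmall] with t ht x
  refine hball ?_
  calc dist (ContinuousLinearMap.id ℝ E + t • A x) (ContinuousLinearMap.id ℝ E)
      = |t| * ‖A x‖ := by rw [dist_eq_norm, add_sub_cancel_left, norm_smul, Real.norm_eq_abs]
    _ ≤ |t| * C := mul_le_mul_of_nonneg_left (hA x) (abs_nonneg t)
    _ < ε := ht

theorem eventually_injective_add_smul {E : Type*} [NormedAddCommGroup E] [NormedSpace ℝ E]
    {W : E → E} {L : NNReal} (hW : LipschitzWith L W) :
    ∀ᶠ t : ℝ in 𝓝 0, Function.Injective fun x => x + t • W x := by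
  have hsmall : ∀ᶠ t : ℝ in 𝓝 0, ‖t‖₊ * L < 1 := by
    have : Continuous fun t : ℝ => ‖t‖₊ * L := by fun_prop
    simpa using this.continuousAt.eventually_lt continuousAt_const (by simp)
  filter_upwards [hsmall] with t ht
  exact (AntilipschitzWith.id.add_lipschitzWith ((lipschitzWith_smul t).comp hW)
    (by simpa using ht)).injective

theorem setIntegral_image_add_smul {E F : Type*} [NormedAddCommGroup E] [NormedSpace ℝ E]
    [FiniteDimensional ℝ E] [MeasurableSpace E] [BorelSpace E] (μ : Measure E)
    [μ.IsAddHaarMeasure] [NormedAddCommGroup F] [NormedSpace ℝ F] {W : E → E}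
    (hW : Differentiable ℝ W) {s : Set E} (hs : MeasurableSet s) {t : ℝ}
    (hinj : Set.InjOn (fun x => x + t • W x) s)
    (hpos : ∀ x ∈ s, 0 < (ContinuousLinearMap.id ℝ E + t • fderiv ℝ W x).det) (g : E → F) :
    ∫ y in (fun x => x + t • W x) '' s, g y ∂μ =
      ∫ x in s, (ContinuousLinearMap.id ℝ E + t • fderiv ℝ W x).det • g (x + t • W x) ∂μ := by
  have hderiv : ∀ x ∈ s, HasFDerivWithinAt (fun x => x + t • W x)
      (ContinuousLinearMap.id ℝ E + t • fderiv ℝ W x) s x := fun x _ =>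
    ((hasFDerivAt_id x).add ((hW x).hasFDerivAt.const_smul t)).hasFDerivWithinAt
  rw [integral_image_eq_integral_abs_det_fderiv_smul μ hs hderiv hinj]
  exact setIntegral_congr_fun hs fun x hx => by rw [abs_of_pos (hpos x hx)]

theorem hasDerivAt_setIntegral_of_contDiff {X P : Type*} [TopologicalSpace X]
    [MeasurableSpace X] [OpensMeasurableSpace X] [NormedAddCommGroup P] [NormedSpace ℝ P]
    {μ : Measure X} {s K : Set X} (hs : MeasurableSet s) (hμs : μ s ≠ ⊤) (hK : IsCompact K)
    (hsK : s ⊆ K) {H : ℝ × P → ℝ} (hH : ContDiff ℝ 1 H) {φ : X → P} (hφ : Continuous φ)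
    (t₀ : ℝ) :
    HasDerivAt (fun t => ∫ x in s, H (t, φ x) ∂μ)
      (∫ x in s, deriv (fun t => H (t, φ x)) t₀ ∂μ) t₀ := by
  have : IsFiniteMeasure (μ.restrict s) := isFiniteMeasure_restrict.2 hμs
  have hmeas : ∀ G : ℝ × P → ℝ, Continuous G → ∀ t,
      AEStronglyMeasurable (fun x => G (t, φ x)) (μ.restrict s) :=
    fun G hG t => (hG.comp ((Continuous.prodMk_right t).comp hφ)).aestronglyMeasurable
  have hbound : ∀ G : ℝ × P → ℝ, Continuous G →
      ∃ C, ∀ᵐ x ∂μ.restrict s, ∀ t ∈ Metric.ball t₀ 1, ‖G (t, φ x)‖ ≤ C := fun G hG => by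
    obtain ⟨C, hC⟩ := ((isCompact_closedBall t₀ 1).prod (hK.image hφ)).exists_bound_of_continuousOn
      hG.continuousOn
    exact ⟨C, (ae_restrict_iff' hs).2 <| .of_forall fun x hx t ht =>
      hC _ ⟨Metric.ball_subset_closedBall ht, Set.mem_image_of_mem φ (hsK hx)⟩⟩
  set H' : ℝ × P → ℝ := fun p => fderiv ℝ H p (1, 0)
  have hH'cont : Continuous H' := (hH.continuous_fderiv one_ne_zero).clm_apply continuous_const
  have hpartial : ∀ t p, HasDerivAt (fun t => H (t, p)) (H' (t, p)) t := fun t p =>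
    ((hH.differentiable one_ne_zero).differentiableAt.hasFDerivAt).comp_hasDerivAt t
      ((hasDerivAt_id t).prodMk (hasDerivAt_const t p))
  obtain ⟨C₀, hC₀⟩ := hbound H hH.continuous
  obtain ⟨C₁, hC₁⟩ := hbound H' hH'cont
  have hint : Integrable (fun x => H (t₀, φ x)) (μ.restrict s) :=
    (integrable_const C₀).mono' (hmeas H hH.continuous t₀)
      (hC₀.mono fun x hx => hx t₀ (Metric.mem_ball_self one_pos))
  have key := hasDerivAt_integral_of_dominated_loc_of_deriv_le (Metric.ball_mem_nhds t₀ one_pos)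
    (.of_forall (hmeas H hH.continuous)) hint (hmeas H' hH'cont t₀) hC₁ (integrable_const C₁)
    (.of_forall fun x t _ => hpartial t (φ x))
  simpa only [(hpartial _ _).deriv] using key.2

theorem hasDerivAt_setIntegral_det_id_add_smul_mul {E : Type*} [NormedAddCommGroup E]
    [NormedSpace ℝ E] [FiniteDimensional ℝ E] [MeasurableSpace E] [BorelSpace E]
    (μ : Measure E) [IsFiniteMeasureOnCompacts μ] {W : E → E} (hW : ContDiff ℝ 1 W)
    {s : Set E} (hs : MeasurableSet s) (hsb : Bornology.IsBounded s) {q : ℝ × E → ℝ}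
    (hq : ContDiff ℝ 1 q) :
    HasDerivAt (fun t => ∫ x in s,
        (ContinuousLinearMap.id ℝ E + t • fderiv ℝ W x).det * q (t, x + t • W x) ∂μ)
      (∫ x in s, (deriv (fun t => q (t, x + t • W x)) 0 +
        q (0, x) * LinearMap.trace ℝ E (fderiv ℝ W x)) ∂μ) 0 := by
  let H : ℝ × (E →L[ℝ] E) × E × E → ℝ := fun p =>
    (ContinuousLinearMap.id ℝ E + p.1 • p.2.1).det * q (p.1, p.2.2.2 + p.1 • p.2.2.1)
  have hH : ContDiff ℝ 1 H :=
    ((ContinuousLinearMap.contDiff_det (E := E)).comp (by fun_prop)).mul (hq.comp (by fun_prop))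
  have hφ : Continuous fun x => (fderiv ℝ W x, W x, x) :=
    (hW.continuous_fderiv one_ne_zero).prodMk (hW.continuous.prodMk continuous_id)
  have hpointwise : ∀ x, deriv (fun t => H (t, fderiv ℝ W x, W x, x)) 0 =
      deriv (fun t => q (t, x + t • W x)) 0 + q (0, x) * LinearMap.trace ℝ E (fderiv ℝ W x) := by
    intro x
    have hq' : DifferentiableAt ℝ (fun t => q (t, x + t • W x)) 0 :=
      (hq.differentiable one_ne_zero).differentiableAt.comp 0 (by fun_prop)
    have hprod : HasDerivAt (fun t => H (t, fderiv ℝ W x, W x, x)) _ 0 :=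
      (ContinuousLinearMap.hasDerivAt_det_id_add_smul (fderiv ℝ W x)).mul hq'.hasDerivAt
    rw [hprod.deriv]
    simp only [zero_smul, add_zero, ContinuousLinearMap.det_id, one_mul]
    ring
  simpa only [hpointwise] using hasDerivAt_setIntegral_of_contDiff hs
    (hsb.measure_lt_top (μ := μ)).ne hsb.isCompact_closure subset_closure hH hφ 0

theorem divg_eq_trace_fderiv {d : ℕ} (v : EuclideanSpace ℝ (Fin d) → EuclideanSpace ℝ (Fin d))
    (x : EuclideanSpace ℝ (Fin d)) :
    divg v x = LinearMap.trace ℝ (EuclideanSpace ℝ (Fin d)) (fderiv ℝ v x) := by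
  rw [LinearMap.trace_eq_matrix_trace ℝ (EuclideanSpace.basisFun (Fin d) ℝ).toBasis]
  rfl

theorem domain_integral_shape_derivative_general {d : ℕ}
    (W : EuclideanSpace ℝ (Fin d) → EuclideanSpace ℝ (Fin d))
    (hW : ContDiff ℝ 1 W) (hWc : HasCompactSupport W)
    (Δ : Set (EuclideanSpace ℝ (Fin d))) (hΔm : MeasurableSet Δ)
    (hΔb : Bornology.IsBounded Δ)
    (q : ℝ × EuclideanSpace ℝ (Fin d) → ℝ) (hq : ContDiff ℝ 1 q) :
    HasDerivAt (fun t => ∫ y in (fun x => x + t • W x) '' Δ, q (t, y))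
      (∫ x in Δ, (deriv (fun t => q (t, x + t • W x)) 0 + q (0, x) * divg W x)) 0 := by
  obtain ⟨C, hC⟩ := (hWc.fderiv ℝ).exists_bound_of_continuous (hW.continuous_fderiv one_ne_zero)
  obtain ⟨L, hL⟩ := ContDiff.lipschitzWith_of_hasCompactSupport hWc hW one_ne_zero
  have hchange : (fun t => ∫ y in (fun x => x + t • W x) '' Δ, q (t, y)) =ᶠ[𝓝 0]
      fun t => ∫ x in Δ,
        (ContinuousLinearMap.id ℝ _ + t • fderiv ℝ W x).det * q (t, x + t • W x) := by
    filter_upwards [eventually_forall_det_id_add_smul_pos hC, eventually_injective_add_smul hL]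
      with t hpos hinj
    exact setIntegral_image_add_smul volume (hW.differentiable one_ne_zero) hΔm hinj.injOn
      (fun x _ => hpos x) (fun y => q (t, y))
  simp only [divg_eq_trace_fderiv]
  exact (hasDerivAt_setIntegral_det_id_add_smul_mul volume hW hΔm hΔb hq).congr_of_eventuallyEq
    hchange

/-- Shape derivative of a domain integral of a time-dependent integrand, via the
material derivative: `d/dt|₀ ∫_{F_t(Δ)} q(t,y) dy = ∫_Δ q̇ + q(0,·) div W`. -/
theorem domain_integral_shape_derivative {d : ℕ} (hd : 1 ≤ d)
    (W : EuclideanSpace ℝ (Fin d) → EuclideanSpace ℝ (Fin d))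
    (hW : ContDiff ℝ 1 W) (hWc : HasCompactSupport W)
    (Δ : Set (EuclideanSpace ℝ (Fin d))) (hΔm : MeasurableSet Δ)
    (hΔb : Bornology.IsBounded Δ)
    (q : ℝ × EuclideanSpace ℝ (Fin d) → ℝ) (hq : ContDiff ℝ 1 q) :
    HasDerivAt (fun t => ∫ y in (fun x => x + t • W x) '' Δ, q (t, y))
      (∫ x in Δ, (deriv (fun t => q (t, x + t • W x)) 0 + q (0, x) * divg W x)) 0 :=
  domain_integral_shape_derivative_general W hW hWc Δ hΔm hΔb q hq
end

section
/- Let d ≥ 1, let W : ℝ^d → ℝ^d be continuously differentiable with compact support, let Δ ⊂ ℝ^d be a bounded measurable set, and let q : ℝ^d → ℝ be continuously differentiable (independent of t). Then the map t ↦ ∫_{F_t(Δ)} q(y) dy is differentiable at t = 0 and d/dt|_{t=0} ∫_{F_t(Δ)} q(y) dy = ∫_Δ ( ∇q(x) · W(x) + q(x) div W(x) ) dx. -/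
/-!
For small `|t|` the map `F_t = id + t • W` is injective on `Δ` (a small Lipschitz perturbation of
the identity) with Jacobian determinant `det (1 + t • DW) > 0`, so the change of variables formula
pulls the integral back to `∫_Δ det (1 + t • DW x) * q (F_t x) dx`. By Jacobi's formula
`d/dt det (1 + t • B) = tr (adj (1 + t • B) * B)` the `t`-derivative of this integrand is jointly
continuous in `(t, x)`, hence bounded on `[-ε/2, ε/2] × closure Δ`, and we may differentiate under
the integral sign. At `t = 0` the derivative is `Dq x (W x) + q x * tr (DW x)`.
-/

open MeasureTheory
open scoped RealInnerProductSpace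

namespace Matrix

variable {𝕜 n : Type*} [NontriviallyNormedField 𝕜] [Fintype n] [DecidableEq n]

open Polynomial in
theorem hasDerivAt_det_one_add_smul_zero (N : Matrix n n 𝕜) :
    HasDerivAt (fun s : 𝕜 => (1 + s • N).det) N.trace 0 := by
  have h := (det (1 + (X : 𝕜[X]) • N.map C)).hasDerivAt 0
  rw [derivative_det_one_add_X_smul] at h
  convert h using 1
  ext s
  simp [eval_det, ← smul_eq_mul_diagonal]

theorem hasDerivAt_det_one_add_smul_s15 (B : Matrix n n 𝕜) {t : 𝕜} (ht : (1 + t • B).det ≠ 0) :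
    HasDerivAt (fun s : 𝕜 => (1 + s • B).det) (adjugate (1 + t • B) * B).trace t := by
  set M := 1 + t • B
  -- `1 + s • B = M * (1 + (s - t) • M⁻¹ * B)` reduces the claim to the derivative at `0`.
  have factor : ∀ s : 𝕜, (1 + s • B).det = M.det * (1 + (s - t) • (M⁻¹ * B)).det := by
    intro s
    rw [← det_mul, mul_add, mul_one, mul_smul_comm, ← mul_assoc, mul_nonsing_inv M ht.isUnit,
      one_mul, sub_smul]
    congr 1
    simp only [M]
    abel
  have trace_eq : M.det * (M⁻¹ * B).trace = (adjugate M * B).trace := by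
    rw [inv_def, smul_mul, trace_smul, smul_eq_mul, ← mul_assoc,
      Ring.mul_inverse_cancel _ ht.isUnit, one_mul]
  rw [funext factor, ← trace_eq]
  refine .const_mul _ (HasDerivAt.comp_sub_const (f := fun s => (1 + s • (M⁻¹ * B)).det) t t ?_)
  simpa using hasDerivAt_det_one_add_smul_zero (M⁻¹ * B)

end Matrix

section ShapePerturbation

variable {E : Type*} [NormedAddCommGroup E] [NormedSpace ℝ E]

theorem ContinuousLinearMap.det_one_add_ne_zero [FiniteDimensional ℝ E] {A : E →L[ℝ] E}
    (hA : ‖A‖ < 1) : (1 + A).det ≠ 0 := by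
  have hunit : IsUnit (1 + A) := by
    have := (Units.oneSub (-A) (by rwa [norm_neg])).isUnit
    rwa [Units.val_oneSub, sub_neg_eq_add] at this
  exact (LinearMap.isUnit_det _ (hunit.map toLinearMapRingHom)).ne_zero

theorem ContinuousLinearMap.det_one_add_smul_pos [FiniteDimensional ℝ E] {A : E →L[ℝ] E}
    {K t : ℝ} (hA : ‖A‖ ≤ K) (ht : |t| * K < 1) : 0 < (1 + t • A).det := by
  have det_ne_zero : ∀ s ∈ Set.uIcc 0 t, (1 + s • A).det ≠ 0 := by
    intro s hs
    have hst : |s| ≤ |t| := by simpa using Set.abs_sub_left_of_mem_uIcc hs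
    refine det_one_add_ne_zero ?_
    rw [norm_smul, Real.norm_eq_abs]
    exact (mul_le_mul hst hA (norm_nonneg A) (abs_nonneg t)).trans_lt ht
  have det_zero : (1 + (0 : ℝ) • A).det = 1 := by
    rw [zero_smul, add_zero, det, toLinearMap_one, map_one]
  by_contra! hle
  obtain ⟨s, hs, hs0⟩ := isPreconnected_uIcc.intermediate_value
    (f := fun s : ℝ => (1 + s • A).det) Set.right_mem_uIcc Set.left_mem_uIcc
    (continuous_det.comp (by fun_prop)).continuousOn
    (show (0 : ℝ) ∈ Set.Icc _ _ from ⟨hle, det_zero ▸ zero_le_one⟩)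
  exact det_ne_zero s hs hs0

theorem LipschitzOnWith.injOn_add_smul {W : E → E} {K : NNReal} {s : Set E}
    (hW : LipschitzOnWith K W s) {t : ℝ} (ht : |t| * K < 1) : s.InjOn fun x => x + t • W x := by
  intro x hx y hy hxy
  have hdist : dist x y ≤ |t| * K * dist x y := calc
    dist x y = dist (t • W y) (t • W x) := by
      rw [dist_eq_norm, dist_eq_norm]
      congr 1
      linear_combination (norm := module) hxy
    _ = |t| * dist (W x) (W y) := by rw [dist_smul₀, Real.norm_eq_abs, dist_comm]
    _ ≤ |t| * (K * dist x y) := by gcongr; exact hW.dist_le_mul x hx y hy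
    _ = |t| * K * dist x y := by ring
  by_contra hne
  nlinarith [dist_pos.mpr hne]

theorem setIntegral_image_add_smul_eq [FiniteDimensional ℝ E] [MeasurableSpace E] [BorelSpace E]
    (μ : Measure E) [μ.IsAddHaarMeasure] {W : E → E} (hW : Differentiable ℝ W) {s U : Set E}
    (hs : MeasurableSet s) (hsU : s ⊆ U) (hU : Convex ℝ U) {K : NNReal}
    (hK : ∀ x ∈ U, ‖fderiv ℝ W x‖₊ ≤ K) {t : ℝ} (ht : |t| * K < 1) (q : E → ℝ) :
    ∫ y in (fun x => x + t • W x) '' s, q y ∂μ =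
      ∫ x in s, (1 + t • fderiv ℝ W x).det * q (x + t • W x) ∂μ := by
  have hderiv : ∀ x ∈ s, HasFDerivWithinAt (fun x => x + t • W x) (1 + t • fderiv ℝ W x) s x :=
    fun x _ => ((hasFDerivAt_id x).add ((hW x).hasFDerivAt.const_smul t)).hasFDerivWithinAt
  have hinj :=
    ((hU.lipschitzOnWith_of_nnnorm_fderiv_le (fun x _ => hW x) hK).mono hsU).injOn_add_smul ht
  rw [integral_image_eq_integral_abs_det_fderiv_smul μ hs hderiv hinj]
  refine setIntegral_congr_fun hs fun x hx => ?_
  rw [abs_of_pos (ContinuousLinearMap.det_one_add_smul_pos (by exact_mod_cast hK x (hsU hx)) ht),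
    smul_eq_mul]

open Matrix in
theorem hasDerivAt_det_one_add_smul_mul_comp_add_smul {ι : Type*} [Fintype ι] [DecidableEq ι]
    {B : Matrix ι ι ℝ} {q : E → ℝ} {x w : E} {t : ℝ} (hB : (1 + t • B).det ≠ 0)
    (hq : DifferentiableAt ℝ q (x + t • w)) :
    HasDerivAt (fun s : ℝ => (1 + s • B).det * q (x + s • w))
      ((adjugate (1 + t • B) * B).trace * q (x + t • w)
        + (1 + t • B).det * fderiv ℝ q (x + t • w) w) t := by
  have hline : HasDerivAt (fun s : ℝ => x + s • w) w t := by
    simpa using ((hasDerivAt_id t).smul_const w).const_add x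
  exact (B.hasDerivAt_det_one_add_smul_s15 hB).mul (hq.hasFDerivAt.comp_hasDerivAt t hline)

open Matrix in
theorem hasDerivAt_setIntegral_det_one_add_smul_mul_comp_add_smul [FiniteDimensional ℝ E]
    [MeasurableSpace E] [BorelSpace E] (μ : Measure E) [IsFiniteMeasureOnCompacts μ]
    {ι : Type*} [Fintype ι] [DecidableEq ι] {B : E → Matrix ι ι ℝ} (hB : Continuous B)
    {W : E → E} (hW : Continuous W) {q : E → ℝ} (hq : ContDiff ℝ 1 q) {s : Set E}
    (hs : MeasurableSet s) (hsb : Bornology.IsBounded s) {ε : ℝ} (hε : 0 < ε)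
    (hdet : ∀ x ∈ s, ∀ t ∈ Metric.ball (0 : ℝ) ε, (1 + t • B x).det ≠ 0) :
    HasDerivAt (fun t : ℝ => ∫ x in s, (1 + t • B x).det * q (x + t • W x) ∂μ)
      (∫ x in s, fderiv ℝ q x (W x) + q x * (B x).trace ∂μ) 0 := by
  set F' : ℝ → E → ℝ := fun t x => (adjugate (1 + t • B x) * B x).trace * q (x + t • W x)
    + (1 + t • B x).det * fderiv ℝ q (x + t • W x) (W x)
  have hDq := hq.continuous_fderiv one_ne_zero
  have hF'c : Continuous (Function.uncurry F') := by
    simp only [F', Function.uncurry_def]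
    fun_prop
  obtain ⟨C, hC⟩ := ((isCompact_closedBall (0 : ℝ) (ε / 2)).prod
    hsb.isCompact_closure).exists_bound_of_continuousOn hF'c.continuousOn
  have hsμ : IsFiniteMeasure (μ.restrict s) := isFiniteMeasure_restrict.mpr
    ((measure_mono subset_closure).trans_lt hsb.isCompact_closure.measure_lt_top).ne
  have hFc : ∀ t : ℝ, Continuous fun x => (1 + t • B x).det * q (x + t • W x) := by fun_prop
  have key := hasDerivAt_integral_of_dominated_loc_of_deriv_le (μ := μ.restrict s)
    (F := fun (t : ℝ) x => (1 + t • B x).det * q (x + t • W x)) (F' := F') (bound := fun _ => C)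
    (Metric.ball_mem_nhds (0 : ℝ) (half_pos hε))
    (.of_forall fun t => (hFc t).aestronglyMeasurable)
    (((hFc 0).continuousOn.integrableOn_compact hsb.isCompact_closure).mono_set subset_closure)
    (hF'c.comp (Continuous.prodMk_right 0)).aestronglyMeasurable ?_ (integrable_const C) ?_
  · refine key.2.congr_deriv (integral_congr_ae (.of_forall fun x => ?_))
    simp [F', add_comm, mul_comm]
  · filter_upwards [ae_restrict_mem hs] with x hx t ht
    exact hC (t, x) ⟨Metric.ball_subset_closedBall ht, subset_closure hx⟩
  · filter_upwards [ae_restrict_mem hs] with x hx t ht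
    exact hasDerivAt_det_one_add_smul_mul_comp_add_smul
      (hdet x hx t (Metric.ball_subset_ball (half_le_self hε.le) ht))
      ((hq.differentiable one_ne_zero) _)

end ShapePerturbation

section Jacobian

variable {d : ℕ}

theorem jac_eq_toMatrix (v : EuclideanSpace ℝ (Fin d) → EuclideanSpace ℝ (Fin d))
    (x : EuclideanSpace ℝ (Fin d)) :
    jac v x = LinearMap.toMatrix (EuclideanSpace.basisFun (Fin d) ℝ).toBasis
      (EuclideanSpace.basisFun (Fin d) ℝ).toBasis (fderiv ℝ v x) := by
  ext i j
  simp [jac, LinearMap.toMatrix_apply]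

theorem det_one_add_smul_fderiv_eq_det_jac
    (v : EuclideanSpace ℝ (Fin d) → EuclideanSpace ℝ (Fin d)) (x : EuclideanSpace ℝ (Fin d))
    (t : ℝ) : (1 + t • fderiv ℝ v x).det = (1 + t • jac v x).det := by
  rw [jac_eq_toMatrix, ContinuousLinearMap.det,
    ← LinearMap.det_toMatrix (EuclideanSpace.basisFun (Fin d) ℝ).toBasis]
  simp

theorem continuous_jac {v : EuclideanSpace ℝ (Fin d) → EuclideanSpace ℝ (Fin d)}
    (hv : ContDiff ℝ 1 v) : Continuous (jac v) :=
  continuous_matrix fun i _ => (EuclideanSpace.proj i).continuous.comp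
    ((hv.continuous_fderiv one_ne_zero).clm_apply continuous_const)

end Jacobian

theorem domain_integral_shape_derivative_autonomous_general {d : ℕ}
    (W : EuclideanSpace ℝ (Fin d) → EuclideanSpace ℝ (Fin d))
    (hW : ContDiff ℝ 1 W)
    (Δ : Set (EuclideanSpace ℝ (Fin d))) (hΔm : MeasurableSet Δ)
    (hΔb : Bornology.IsBounded Δ)
    (q : EuclideanSpace ℝ (Fin d) → ℝ) (hq : ContDiff ℝ 1 q) :
    HasDerivAt (fun t : ℝ => ∫ y in (fun x => x + t • W x) '' Δ, q y)
      (∫ x in Δ, (⟪gradient q x, W x⟫ + q x * divg W x)) (0 : ℝ) := by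
  obtain ⟨R, hΔR⟩ := hΔb.subset_closedBall 0
  obtain ⟨K, hK⟩ := (isCompact_closedBall (0 : EuclideanSpace ℝ (Fin d)) R).bddAbove_image
    (continuous_nnnorm.comp (hW.continuous_fderiv one_ne_zero)).continuousOn
  have hsmall : ∀ t ∈ Metric.ball (0 : ℝ) (K + 1)⁻¹, |t| * K < 1 := fun t ht => calc
    |t| * K ≤ |t| * (K + 1) := by gcongr; linarith
    _ < (K + 1)⁻¹ * (K + 1) := by gcongr; simpa using ht
    _ = 1 := inv_mul_cancel₀ (by positivity)
  have hdet : ∀ x ∈ Δ, ∀ t ∈ Metric.ball (0 : ℝ) (K + 1)⁻¹, (1 + t • jac W x).det ≠ 0 :=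
    fun x hx t ht => det_one_add_smul_fderiv_eq_det_jac W x t ▸
      (ContinuousLinearMap.det_one_add_smul_pos (by exact_mod_cast hK ⟨x, hΔR hx, rfl⟩)
        (hsmall t ht)).ne'
  have hpullback : (fun t : ℝ => ∫ x in Δ, (1 + t • jac W x).det * q (x + t • W x)) =ᶠ[nhds 0]
      fun t : ℝ => ∫ y in (fun x => x + t • W x) '' Δ, q y := by
    filter_upwards [Metric.ball_mem_nhds (0 : ℝ) (by positivity : (0 : ℝ) < (K + 1)⁻¹)] with t ht
    rw [setIntegral_image_add_smul_eq volume (hW.differentiable one_ne_zero) hΔm hΔR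
      (convex_closedBall 0 R) (fun x hx => hK ⟨x, hx, rfl⟩) (hsmall t ht)]
    simp_rw [det_one_add_smul_fderiv_eq_det_jac]
  simp_rw [inner_gradient_left]
  exact (hasDerivAt_setIntegral_det_one_add_smul_mul_comp_add_smul volume (continuous_jac hW)
    hW.continuous hq hΔm hΔb (by positivity) hdet).congr_of_eventuallyEq hpullback.symm

/-- Shape derivative of a domain integral with a shape-independent integrand:
`d/dt|₀ ∫_{F_t(Δ)} q(y) dy = ∫_Δ (∇q(x) · W(x) + q(x) div W(x)) dx`. -/
theorem domain_integral_shape_derivative_autonomous {d : ℕ} (hd : 1 ≤ d)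
    (W : EuclideanSpace ℝ (Fin d) → EuclideanSpace ℝ (Fin d))
    (hW : ContDiff ℝ 1 W) (hWc : HasCompactSupport W)
    (Δ : Set (EuclideanSpace ℝ (Fin d))) (hΔm : MeasurableSet Δ)
    (hΔb : Bornology.IsBounded Δ)
    (q : EuclideanSpace ℝ (Fin d) → ℝ) (hq : ContDiff ℝ 1 q) :
    HasDerivAt (fun t : ℝ => ∫ y in (fun x => x + t • W x) '' Δ, q y)
      (∫ x in Δ, (⟪gradient q x, W x⟫ + q x * divg W x)) (0 : ℝ) :=
  domain_integral_shape_derivative_autonomous_general W hW Δ hΔm hΔb q hq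
end
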